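/- Let q > 1 and x > (q−1)^{−1}. Then the q-exponential admits the convergent representation e_q^{−x} = [(q−1)x]^{−1/(q−1)} ( 1 − 1/((1−q)² x) + (1/((1−q)⁴ x²)) Σ_{n=0}^∞ ((−1)^n A_n(q)/((n+2)!(q−1)^{2n})) (1/x)ⁿ ). -/

import Mathlib

open Complex MeasureTheory Filter Topology

noncomputable section

/-- The complex `q`-exponential: principal branch of `(1+(1-q)z)^{1/(1-q)}`. -/
def qExp (q : ℝ) (z : ℂ) : ℂ := (1 + (1 - (q : ℂ)) * z) ^ ((1 : ℂ) / (1 - (q : ℂ)))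

/-- The real `q`-exponential `e_q^x = [1+(1-q)x]₊^{1/(1-q)}`. -/
def qExpR (q x : ℝ) : ℝ := (max (1 + (1 - q) * x) 0) ^ (1 / (1 - q))

/-- The complex `q`-product (principal branches). -/
def qProdC (q : ℝ) (z w : ℂ) : ℂ :=
  (z ^ (1 - (q : ℂ)) + w ^ (1 - (q : ℂ)) - 1) ^ ((1 : ℂ) / (1 - (q : ℂ)))

/-- The `q`-Fourier transform `F_q[f](ξ) = ∫ f(x) e_q^{i x ξ f(x)^{q-1}} dx`. -/
def qFourier (q : ℝ) (f : ℝ → ℝ) (ξ : ℝ) : ℂ :=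
  ∫ x : ℝ, (f x : ℂ) * qExp q (Complex.I * (x : ℂ) * (ξ : ℂ) * ((f x ^ (q - 1) : ℝ) : ℂ))

/-- `A_n(q) = ∏_{k=0}^n (q - k(1-q))`. -/
def qA (q : ℝ) (n : ℕ) : ℝ := ∏ k ∈ Finset.range (n + 1), (q - (k : ℝ) * (1 - q))

/-- The `q`-cosine, defined for all real `x` by its power series. -/
def qCos (q x : ℝ) : ℝ :=
  1 - x ^ 2 * ∑' n : ℕ, (-1 : ℝ) ^ n * qA q (2 * n) / (Nat.factorial (2 * n + 2) : ℝ) * x ^ (2 * n)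

/-- The `q`-sine, defined for all real `x` by its power series. -/
def qSin (q x : ℝ) : ℝ :=
  x - x ^ 2 * ∑' n : ℕ, (-1 : ℝ) ^ n * qA q (2 * n + 1) / (Nat.factorial (2 * n + 3) : ℝ) * x ^ (2 * n + 1)

/-- `Ψ_q(x) = cos_q(2x) - 1`. -/
def qPsi (q x : ℝ) : ℝ := qCos q (2 * x) - 1

/-- The complex-valued `q`-sine `sin_q(x) = (e_q^{ix} - e_q^{-ix})/(2i)`. -/
def qSinC (q : ℝ) (x : ℝ) : ℂ :=
  (qExp q (Complex.I * (x : ℂ)) - qExp q (-(Complex.I * (x : ℂ)))) / (2 * Complex.I)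

/-- The constant `μ_{q,α}` (with tail constant `C`). -/
def qMu (q α C : ℝ) : ℝ :=
  (2 ^ (2 - α) * (1 + α * (q - 1)) * C / (2 - q)) *
    ∫ y in Set.Ioi (0 : ℝ), (-qPsi q y) / y ^ (α + 1)

/-- The `n`-fold `q`-product `g 0 ⊗_q g 1 ⊗_q ⋯ ⊗_q g (n-1)`. -/
def qProdFold (q : ℝ) (g : ℕ → ℂ) : ℕ → ℂ
  | 0 => 1
  | 1 => g 0
  | (n + 2) => qProdC q (qProdFold q g (n + 1)) (g (n + 1))


/-! For `q > 1` we have `e_q^{-x} = (1 + (q-1)x)^{-1/(q-1)} = ((q-1)x)^{-1/(q-1)} (1 + t)^{-1/(q-1)}`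
with `t = ((q-1)x)⁻¹ < 1`, and the second factor is given by the binomial series. Its terms of
order `n + 2` have coefficient `(-1)^n A_n(q) / ((n+2)! (q-1)^{n+2})`, because the falling
factorial of `-(q-1)⁻¹` has factors `-(1 + k(q-1))/(q-1)` and `q - k(1-q) = 1 + (k+1)(q-1)`. -/

open Finset

theorem Ring.choose_eq_prod_range_div {K : Type*} [Field K] [CharZero K] (a : K) (n : ℕ) :
    Ring.choose a n = (∏ j ∈ range n, (a - j)) / n.factorial := by
  rw [Ring.choose_eq_smul, ← Polynomial.aeval_eq_smeval, Polynomial.aeval_def,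
    Polynomial.eval₂_eq_eval_map, descPochhammer_map, descPochhammer_eval_eq_prod_range,
    smul_eq_mul, div_eq_inv_mul]

theorem Real.hasSum_choose_mul_pow (a : ℝ) {t : ℝ} (ht : |t| < 1) :
    HasSum (fun n => Ring.choose a n * t ^ n) ((1 + t) ^ a) := by
  have ht' : t ∈ Metric.eball (0 : ℝ) 1 := by
    rw [Metric.mem_eball, edist_zero_right, ← ofReal_norm, ENNReal.ofReal_lt_one]
    exact ht
  simpa [binomialSeries, FormalMultilinearSeries.ofScalars] using
    Real.one_add_rpow_hasFPowerSeriesOnBall_zero.hasSum ht'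

theorem qExpR_neg_of_one_lt {q x : ℝ} (hq : 1 < q) (hx : 0 ≤ x) :
    qExpR q (-x) = (1 + (q - 1) * x) ^ (-(q - 1)⁻¹) := by
  have : 0 ≤ (q - 1) * x := mul_nonneg (by linarith) hx
  rw [qExpR, max_eq_left (by nlinarith), one_div, ← neg_sub, inv_neg]
  ring_nf

theorem qA_eq_prod_range (q : ℝ) (n : ℕ) :
    qA q n = ∏ k ∈ range (n + 2), (1 + k * (q - 1)) := by
  rw [prod_range_succ', qA]
  push_cast
  simp only [zero_mul, add_zero, mul_one]
  exact prod_congr rfl fun k _ => by ring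

theorem choose_neg_inv_sub_one_add_two {q : ℝ} (hq : q ≠ 1) (n : ℕ) :
    Ring.choose (-(q - 1)⁻¹) (n + 2) = (-(q - 1)⁻¹) ^ (n + 2) * qA q n / (n + 2).factorial := by
  have hq' : q - 1 ≠ 0 := sub_ne_zero.2 hq
  have hfactor : ∀ k : ℕ, -(q - 1)⁻¹ - k = -(q - 1)⁻¹ * (1 + k * (q - 1)) := fun k => by
    field_simp
    ring
  rw [Ring.choose_eq_prod_range_div, qA_eq_prod_range, prod_congr rfl fun k _ => hfactor k,
    prod_mul_distrib, prod_const, card_range]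

theorem choose_neg_inv_sub_one_mul_inv_pow_add_two {q x : ℝ} (hq : q ≠ 1) (hx : x ≠ 0) (n : ℕ) :
    Ring.choose (-(q - 1)⁻¹) (n + 2) * ((q - 1) * x)⁻¹ ^ (n + 2) =
      1 / ((1 - q) ^ 4 * x ^ 2) * ((-1 : ℝ) ^ n * qA q n /
        ((Nat.factorial (n + 2) : ℝ) * (q - 1) ^ (2 * n)) * (1 / x) ^ n) := by
  have hq' : q - 1 ≠ 0 := sub_ne_zero.2 hq
  rw [choose_neg_inv_sub_one_add_two hq, show (1 - q) ^ 4 = (q - 1) ^ 4 by ring]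
  generalize q - 1 = s at hq' ⊢
  rw [neg_pow, pow_add (-1 : ℝ), neg_one_sq, mul_one]
  simp only [one_div, inv_pow, mul_pow, mul_inv]
  field_simp
  ring

/-- Convergent representation of `e_q^{-x}` for `q > 1` and `x > (q-1)⁻¹`. -/
theorem qExp_neg_representation (q x : ℝ) (hq : 1 < q) (hx : (q - 1)⁻¹ < x) :
    qExpR q (-x) = ((q - 1) * x) ^ (-(1 / (q - 1))) *
      (1 - 1 / ((1 - q) ^ 2 * x) + 1 / ((1 - q) ^ 4 * x ^ 2) *
        ∑' n : ℕ, (-1 : ℝ) ^ n * qA q n /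
          ((Nat.factorial (n + 2) : ℝ) * (q - 1) ^ (2 * n)) * (1 / x) ^ n) := by
  have hq1 : 0 < q - 1 := sub_pos.2 hq
  have hx0 : 0 < x := (inv_pos.2 hq1).trans hx
  have ht : |((q - 1) * x)⁻¹| < 1 := by
    rw [abs_of_pos (by positivity)]
    exact inv_lt_one_of_one_lt₀ (by rwa [← inv_lt_iff_one_lt_mul₀' hq1])
  have hsplit : 1 + (q - 1) * x = (q - 1) * x * (1 + ((q - 1) * x)⁻¹) := by
    rw [mul_add, mul_inv_cancel₀ (by positivity), mul_one, add_comm]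
  have htail := (hasSum_nat_add_iff' 2).2 (Real.hasSum_choose_mul_pow (-(q - 1)⁻¹) ht)
  simp only [choose_neg_inv_sub_one_mul_inv_pow_add_two hq.ne' hx0.ne'] at htail
  rw [qExpR_neg_of_one_lt hq hx0.le, hsplit, Real.mul_rpow (by positivity) (by positivity), one_div,
    ← tsum_mul_left, htail.tsum_eq, sum_range_succ, sum_range_one, Ring.choose_zero_right,
    Ring.choose_one_right]
  congr 1
  generalize (1 + ((q - 1) * x)⁻¹) ^ (-(q - 1)⁻¹) = S
  rw [show (1 - q) ^ 2 = (q - 1) ^ 2 by ring]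
  field_simp
  ring
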